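/- (Invariance of the local-reference-frame transformed observation.) Let g = (0,0,1) ∈ ℝ³ and let u ∈ ℝ³ satisfy u − ⟨u,g⟩g ≠ 0. Define OP(u) as the 3×3 matrix whose columns are e₁(u) = (u − ⟨u,g⟩g)/‖u − ⟨u,g⟩g‖, e₂(u) = e₁(u) × g, and e₃ = g. Then for every real 3×3 matrix O with Oᵀ O = I, det(O) = 1, and O g = g, and every vector z ∈ ℝ³, one has OP(O u)ᵀ (O z) = OP(u)ᵀ z. -/

import Mathlib

open Matrix

/-- The gravity direction `g = (0,0,1)`. -/
noncomputable def gvec : Fin 3 → ℝ := ![0, 0, 1]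

/-- Euclidean norm on `ℝ³` (vectors as `Fin 3 → ℝ`). -/
noncomputable def enorm3 (v : Fin 3 → ℝ) : ℝ := Real.sqrt (v ⬝ᵥ v)

/-- `e₁(u) = (u − ⟨u,g⟩g)/‖u − ⟨u,g⟩g‖`, the normalized horizontal component of `u`. -/
noncomputable def e1 (u : Fin 3 → ℝ) : Fin 3 → ℝ :=
  (enorm3 (u - (u ⬝ᵥ gvec) • gvec))⁻¹ • (u - (u ⬝ᵥ gvec) • gvec)

/-- `e₂(u) = e₁(u) × g`. -/
noncomputable def e2 (u : Fin 3 → ℝ) : Fin 3 → ℝ := crossProduct (e1 u) gvec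

/-- `OP(u)` is the 3×3 matrix whose columns are `e₁(u)`, `e₂(u)`, and `g`. -/
noncomputable def OP (u : Fin 3 → ℝ) : Matrix (Fin 3) (Fin 3) ℝ :=
  Matrix.of fun i j => ![e1 u, e2 u, gvec] j i

lemma dot_O (O : Matrix (Fin 3) (Fin 3) ℝ) (hO : Oᵀ * O = 1) (v w : Fin 3 → ℝ) :
    (O *ᵥ v) ⬝ᵥ (O *ᵥ w) = v ⬝ᵥ w := by
  rw [dotProduct_mulVec, ← Matrix.mulVec_transpose, Matrix.mulVec_mulVec, hO, Matrix.one_mulVec]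

lemma cross_O (O : Matrix (Fin 3) (Fin 3) ℝ) (hO : Oᵀ * O = 1) (hdet : O.det = 1)
    (v w : Fin 3 → ℝ) : (O *ᵥ v) ⨯₃ (O *ᵥ w) = O *ᵥ (v ⨯₃ w) := by
  have hOOt : O * Oᵀ = 1 := mul_eq_one_comm.mp hO
  ext i
  have key : ∀ x : Fin 3 → ℝ, x ⬝ᵥ ((O *ᵥ v) ⨯₃ (O *ᵥ w)) = x ⬝ᵥ (O *ᵥ (v ⨯₃ w)) := by
    intro x
    have hx : O *ᵥ (Oᵀ *ᵥ x) = x := by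
      rw [Matrix.mulVec_mulVec, hOOt, Matrix.one_mulVec]
    set y := Oᵀ *ᵥ x with hy
    calc x ⬝ᵥ ((O *ᵥ v) ⨯₃ (O *ᵥ w)) = (O *ᵥ y) ⬝ᵥ ((O *ᵥ v) ⨯₃ (O *ᵥ w)) := by rw [hx]
      _ = Matrix.det ![O *ᵥ y, O *ᵥ v, O *ᵥ w] := triple_product_eq_det _ _ _
      _ = Matrix.det (Matrix.of ![y, v, w] * Oᵀ) := by
          congr 1
          ext i j
          fin_cases i <;> simp [Matrix.mul_apply, Matrix.mulVec, dotProduct, mul_comm]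
      _ = Matrix.det ![y, v, w] := by rw [Matrix.det_mul, Matrix.det_transpose, hdet, mul_one]; rfl
      _ = y ⬝ᵥ (v ⨯₃ w) := (triple_product_eq_det _ _ _).symm
      _ = (O *ᵥ y) ⬝ᵥ (O *ᵥ (v ⨯₃ w)) := (dot_O O hO _ _).symm
      _ = x ⬝ᵥ (O *ᵥ (v ⨯₃ w)) := by rw [hx]
  have := key (Pi.single i 1)
  simpa [dotProduct, Pi.single_apply] using this

/-- Invariance of the local-reference-frame transformed observation: if `u − ⟨u,g⟩g ≠ 0` and
`O ∈ SO_g(3)` (`Oᵀ O = 1`, `det O = 1`, `O g = g`), then for every `z : ℝ³`,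
`OP(O u)ᵀ (O z) = OP(u)ᵀ z`. -/
theorem OP_observation_invariant (u : Fin 3 → ℝ) (hu : u - (u ⬝ᵥ gvec) • gvec ≠ 0)
    (O : Matrix (Fin 3) (Fin 3) ℝ) (hO : Oᵀ * O = 1) (hdet : O.det = 1)
    (hg : O *ᵥ gvec = gvec) (z : Fin 3 → ℝ) :
    (OP (O *ᵥ u))ᵀ *ᵥ (O *ᵥ z) = (OP u)ᵀ *ᵥ z := by
  have hdotg : (O *ᵥ u) ⬝ᵥ gvec = u ⬝ᵥ gvec := by
    conv_lhs => rw [← hg]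
    exact dot_O O hO u gvec
  have hlin : (O *ᵥ u) - ((O *ᵥ u) ⬝ᵥ gvec) • gvec = O *ᵥ (u - (u ⬝ᵥ gvec) • gvec) := by
    rw [hdotg, Matrix.mulVec_sub, Matrix.mulVec_smul, hg]
  have hnorm : enorm3 (O *ᵥ (u - (u ⬝ᵥ gvec) • gvec)) = enorm3 (u - (u ⬝ᵥ gvec) • gvec) := by
    unfold enorm3; rw [dot_O O hO]
  have he1 : e1 (O *ᵥ u) = O *ᵥ e1 u := by
    unfold e1
    rw [hlin, hnorm, Matrix.mulVec_smul]
  have he2 : e2 (O *ᵥ u) = O *ᵥ e2 u := by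
    unfold e2
    rw [he1]
    conv_lhs => rw [← hg]
    exact cross_O O hO hdet _ _
  ext i
  have hcol : (fun j => OP (O *ᵥ u) j i) = O *ᵥ (fun j => OP u j i) := by
    unfold OP
    fin_cases i <;> simp [he1, he2, hg]
  have : ((OP (O *ᵥ u))ᵀ *ᵥ (O *ᵥ z)) i = (fun j => OP (O *ᵥ u) j i) ⬝ᵥ (O *ᵥ z) := by
    simp [Matrix.mulVec, dotProduct, Matrix.transpose_apply]
  rw [this, hcol, dot_O O hO]
  simp [Matrix.mulVec, dotProduct, Matrix.transpose_apply]
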